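/- arXiv:1611.03933 — 2 statements merged into one kernel-verified Lean document; each statement's English description precedes it below -/
import Mathlib

section
/- Let b > 0, R > 0, γ ≥ 0, and let η : [R,∞) → ℝ be continuous with η(s) → 0 as s → ∞ and sup_{s≥R} s^γ |η(s)| < ∞. Let w(s) = s ∫_s^∞ x^{−2} ( ∫_x^∞ ξ exp(−(b/4)(ξ² − x²)) η(ξ) dξ ) dx be the unique C² solution of w'' − (b/2)(s w' − w) = η with w/s → 0 and s w' − w → 0 at infinity. Then sup_{s≥R} s^γ |w''(s)| ≤ 4 · sup_{s≥R} s^γ |η(s)|. -/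
/-!
Write `w(s) = s H(s)` with `H(s) = ∫_s^∞ x⁻² T(x) dx` and
`T(x) = ∫_x^∞ ξ exp(-(b/4)(ξ² - x²)) η(ξ) dξ`. Since `T' = (b/2) x T - x η`, differentiating
twice gives `w'' = η - (b/2) T`. As `∫_x^∞ ξ exp(-(b/4)(ξ² - x²)) dξ = 2/b`, we get
`|T(s)| ≤ (2/b) sup_{ξ ≥ s} |η ξ| ≤ (2/b) A s^{-γ}` because `s^γ ≤ ξ^γ`, so in fact
`s^γ |w''(s)| ≤ 2A`.
-/

open Set Filter MeasureTheory

/-- The representation formula for the solution of `w'' - (b/2)(s w' - w) = η`. -/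
noncomputable def wrep (b : ℝ) (η : ℝ → ℝ) (s : ℝ) : ℝ :=
  s * ∫ x in Set.Ioi s, (x ^ 2)⁻¹ *
    ∫ ξ in Set.Ioi x, ξ * Real.exp (-(b / 4) * (ξ ^ 2 - x ^ 2)) * η ξ

theorem iteratedDerivWithin_two_eq_of_hasDerivWithinAt {s : Set ℝ} (hs : UniqueDiffOn ℝ s)
    {f f' f'' : ℝ → ℝ} (hf : ∀ y ∈ s, HasDerivWithinAt f (f' y) s y)
    (hf' : ∀ y ∈ s, HasDerivWithinAt f' (f'' y) s y) {x : ℝ} (hx : x ∈ s) :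
    iteratedDerivWithin 2 f s x = f'' x := by
  rw [iteratedDerivWithin_succ, iteratedDerivWithin_one,
    derivWithin_congr (fun y hy => (hf y hy).derivWithin (hs y hy))
      ((hf x hx).derivWithin (hs x hx))]
  exact (hf' x hx).derivWithin (hs x hx)

section Primitive

variable {E : Type*} [NormedAddCommGroup E] [NormedSpace ℝ E] [CompleteSpace E]
  {f : ℝ → E} {a x : ℝ}

theorem hasDerivWithinAt_intervalIntegral_of_continuousOn_Ici (hf : ContinuousOn f (Ici a))
    (hx : x ∈ Ici a) : HasDerivWithinAt (fun u => ∫ t in a..u, f t) (f x) (Ici a) x := by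
  have hint : IntervalIntegrable f volume a x :=
    (hf.mono Icc_subset_Ici_self).intervalIntegrable_of_Icc hx
  rcases (mem_Ici.mp hx).eq_or_lt with rfl | hax
  · exact intervalIntegral.integral_hasDerivWithinAt_right hint
      ⟨Ioi a, self_mem_nhdsWithin, (hf.mono Ioi_subset_Ici_self).aestronglyMeasurable
        measurableSet_Ioi⟩ ((hf a self_mem_Ici).mono Ioi_subset_Ici_self)
  · exact (intervalIntegral.integral_hasDerivAt_right hint
      ⟨Ici a, Ici_mem_nhds hax, hf.aestronglyMeasurable measurableSet_Ici⟩
      ((hf x hx).continuousAt (Ici_mem_nhds hax))).hasDerivWithinAt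

theorem hasDerivWithinAt_integral_Ioi_of_continuousOn_Ici (hf : ContinuousOn f (Ici a))
    (hint : IntegrableOn f (Ioi a)) (hx : x ∈ Ici a) :
    HasDerivWithinAt (fun u => ∫ t in Ioi u, f t) (-f x) (Ici a) x := by
  have hsplit : ∀ u ∈ Ici a, ∫ t in Ioi u, f t = (∫ t in Ioi a, f t) - ∫ t in a..u, f t :=
    fun u hu => by rw [← intervalIntegral.integral_Ioi_sub_Ioi hint hu, sub_sub_cancel]
  exact ((hasDerivWithinAt_intervalIntegral_of_continuousOn_Ici hf hx).const_sub _).congr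
    hsplit (hsplit x hx)

end Primitive

theorem integral_Ioi_mul_exp_neg_mul_sq {c : ℝ} (hc : 0 < c) (x : ℝ) :
    ∫ ξ in Ioi x, ξ * Real.exp (-c * ξ ^ 2) = Real.exp (-c * x ^ 2) / (2 * c) := by
  have hderiv : ∀ u : ℝ, HasDerivAt (fun u => -(Real.exp (-c * u ^ 2) / (2 * c)))
      (u * Real.exp (-c * u ^ 2)) u := fun u => by
    have h : HasDerivAt (fun u : ℝ => -c * u ^ 2) (-c * (2 * u)) u := by
      simpa using (hasDerivAt_pow 2 u).const_mul (-c)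
    exact (h.exp.div_const (2 * c)).fun_neg.congr_deriv (by field_simp)
  have hlim : Tendsto (fun u : ℝ => -(Real.exp (-c * u ^ 2) / (2 * c))) atTop (nhds 0) := by
    have h : Tendsto (fun u : ℝ => -c * u ^ 2) atTop atBot :=
      (tendsto_pow_atTop two_ne_zero).const_mul_atTop_of_neg (neg_lt_zero.mpr hc)
    simpa using ((Real.tendsto_exp_atBot.comp h).div_const (2 * c)).neg
  rw [integral_Ioi_of_hasDerivAt_of_tendsto' (fun u _ => hderiv u)
    (integrable_mul_exp_neg_mul_sq hc).integrableOn hlim]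
  ring

section GaussianWeight

variable {c M x : ℝ} {f : ℝ → ℝ}

theorem integrableOn_Ioi_mul_exp_neg_mul_sq_mul (hc : 0 < c)
    (hf : AEStronglyMeasurable f (volume.restrict (Ioi x))) (hM : ∀ ξ ∈ Ioi x, |f ξ| ≤ M) :
    IntegrableOn (fun ξ => ξ * Real.exp (-c * ξ ^ 2) * f ξ) (Ioi x) := by
  exact (integrable_mul_exp_neg_mul_sq hc).integrableOn.mul_bdd hf
    ((ae_restrict_mem measurableSet_Ioi).mono hM)

theorem abs_integral_Ioi_mul_exp_neg_mul_sq_mul_le (hc : 0 < c) (hx : 0 ≤ x)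
    (hM : ∀ ξ ∈ Ioi x, |f ξ| ≤ M) :
    |∫ ξ in Ioi x, ξ * Real.exp (-c * ξ ^ 2) * f ξ| ≤ M * (Real.exp (-c * x ^ 2) / (2 * c)) := by
  rw [← integral_Ioi_mul_exp_neg_mul_sq hc, ← integral_const_mul, ← Real.norm_eq_abs]
  refine norm_integral_le_of_norm_le
    ((integrable_mul_exp_neg_mul_sq hc).integrableOn.const_mul M) ?_
  filter_upwards [ae_restrict_mem measurableSet_Ioi] with ξ hξ
  have hweight : 0 < ξ * Real.exp (-c * ξ ^ 2) := mul_pos (hx.trans_lt hξ) (Real.exp_pos _)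
  rw [Real.norm_eq_abs, abs_mul, abs_of_pos hweight, mul_comm M]
  exact mul_le_mul_of_nonneg_left (hM ξ hξ) hweight.le

end GaussianWeight

noncomputable def gaussianTail (c : ℝ) (η : ℝ → ℝ) (x : ℝ) : ℝ :=
  ∫ ξ in Ioi x, ξ * Real.exp (-c * (ξ ^ 2 - x ^ 2)) * η ξ

section GaussianTail

variable {c M R x : ℝ} {η : ℝ → ℝ}

theorem gaussianTail_eq_exp_mul (c : ℝ) (η : ℝ → ℝ) (x : ℝ) :
    gaussianTail c η x =
      Real.exp (c * x ^ 2) * ∫ ξ in Ioi x, ξ * Real.exp (-c * ξ ^ 2) * η ξ := by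
  rw [gaussianTail, ← integral_const_mul]
  congr 1 with ξ
  rw [show -c * (ξ ^ 2 - x ^ 2) = c * x ^ 2 + -c * ξ ^ 2 by ring, Real.exp_add]
  ring

theorem abs_gaussianTail_le (hc : 0 < c) (hx : 0 ≤ x) (hM : ∀ ξ ∈ Ioi x, |η ξ| ≤ M) :
    |gaussianTail c η x| ≤ M / (2 * c) := by
  rw [gaussianTail_eq_exp_mul, abs_mul, abs_of_pos (Real.exp_pos _)]
  calc _ ≤ Real.exp (c * x ^ 2) * (M * (Real.exp (-c * x ^ 2) / (2 * c))) :=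
        mul_le_mul_of_nonneg_left (abs_integral_Ioi_mul_exp_neg_mul_sq_mul_le hc hx hM)
          (Real.exp_pos _).le
    _ = M / (2 * c) := by
        rw [neg_mul, Real.exp_neg]
        field_simp

theorem hasDerivWithinAt_gaussianTail (hc : 0 < c) (hη : ContinuousOn η (Ici R))
    (hM : ∀ ξ ∈ Ici R, |η ξ| ≤ M) (hx : x ∈ Ici R) :
    HasDerivWithinAt (gaussianTail c η) (2 * c * x * gaussianTail c η x - x * η x) (Ici R) x := by
  have hweighted : ContinuousOn (fun ξ => ξ * Real.exp (-c * ξ ^ 2) * η ξ) (Ici R) :=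
    (by fun_prop : Continuous fun ξ : ℝ => ξ * Real.exp (-c * ξ ^ 2)).continuousOn.mul hη
  have hint : IntegrableOn (fun ξ => ξ * Real.exp (-c * ξ ^ 2) * η ξ) (Ioi R) :=
    integrableOn_Ioi_mul_exp_neg_mul_sq_mul hc
      ((hη.mono Ioi_subset_Ici_self).aestronglyMeasurable measurableSet_Ioi)
      (fun ξ hξ => hM ξ (mem_Ici.mpr hξ.le))
  have hexp : HasDerivAt (fun y => Real.exp (c * y ^ 2))
      (Real.exp (c * x ^ 2) * (c * (2 * x))) x := by
    simpa using ((hasDerivAt_pow 2 x).const_mul c).exp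
  have hcancel : Real.exp (c * x ^ 2) * Real.exp (-c * x ^ 2) = 1 := by
    rw [← Real.exp_add, neg_mul, add_neg_cancel, Real.exp_zero]
  rw [show gaussianTail c η = _ from funext (gaussianTail_eq_exp_mul c η)]
  refine (hexp.hasDerivWithinAt.mul
    (hasDerivWithinAt_integral_Ioi_of_continuousOn_Ici hweighted hint hx)).congr_deriv ?_
  linear_combination (-(x * η x)) * hcancel

end GaussianTail

section InverseSquareWeight

variable {R M : ℝ} {T T' : ℝ → ℝ}

theorem integrableOn_Ioi_inv_sq_mul (hR : 0 < R) (hT : ContinuousOn T (Ici R))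
    (hM : ∀ x ∈ Ioi R, |T x| ≤ M) : IntegrableOn (fun x => (x ^ 2)⁻¹ * T x) (Ioi R) := by
  have hsq : IntegrableOn (fun x : ℝ => (x ^ 2)⁻¹) (Ioi R) := by
    refine (integrableOn_Ioi_rpow_of_lt (by norm_num : (-2 : ℝ) < -1) hR).congr_fun
      (fun x hx => ?_) measurableSet_Ioi
    show x ^ (-2 : ℝ) = _
    rw [Real.rpow_neg (hR.trans hx).le, Real.rpow_two]
  exact hsq.mul_bdd ((hT.mono Ioi_subset_Ici_self).aestronglyMeasurable measurableSet_Ioi)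
    ((ae_restrict_mem measurableSet_Ioi).mono hM)

theorem iteratedDerivWithin_two_mul_integral_Ioi_inv_sq_mul (hR : 0 < R)
    (hT : ∀ x ∈ Ici R, HasDerivWithinAt T (T' x) (Ici R) x)
    (hint : IntegrableOn (fun x => (x ^ 2)⁻¹ * T x) (Ioi R)) {s : ℝ} (hs : s ∈ Ici R) :
    iteratedDerivWithin 2 (fun s => s * ∫ x in Ioi s, (x ^ 2)⁻¹ * T x) (Ici R) s
      = -(T' s / s) := by
  have hpos : ∀ x ∈ Ici R, x ≠ 0 := fun x hx => (hR.trans_le hx).ne'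
  have hcont : ContinuousOn (fun x => (x ^ 2)⁻¹ * T x) (Ici R) := fun x hx =>
    ((continuousAt_id.pow 2).inv₀ (pow_ne_zero 2 (hpos x hx))).continuousWithinAt.mul
      (hT x hx).continuousWithinAt
  have hH := fun x (hx : x ∈ Ici R) =>
    hasDerivWithinAt_integral_Ioi_of_continuousOn_Ici hcont hint hx
  refine iteratedDerivWithin_two_eq_of_hasDerivWithinAt (uniqueDiffOn_Ici R)
    (f' := fun x => (∫ t in Ioi x, (t ^ 2)⁻¹ * T t) - T x / x) (f'' := fun x => -(T' x / x))
    (fun x hx => ?_) (fun x hx => ?_) hs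
  · refine ((hasDerivWithinAt_id x _).mul (hH x hx)).congr_deriv ?_
    simp only [id_eq]
    field_simp [hpos x hx]
    ring
  · refine ((hH x hx).sub ((hT x hx).div (hasDerivWithinAt_id x _) (hpos x hx))).congr_deriv ?_
    simp only [id_eq]
    field_simp [hpos x hx]
    ring

end InverseSquareWeight

/-- Here `s w' - w = -gaussianTail (b / 4) η s` for `w = wrep b η`, so this is the equation
`w'' - (b/2)(s w' - w) = η`. -/
theorem iteratedDerivWithin_two_wrep {b R M : ℝ} (hb : 0 < b) (hR : 0 < R) {η : ℝ → ℝ}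
    (hη : ContinuousOn η (Ici R)) (hM : ∀ ξ ∈ Ici R, |η ξ| ≤ M) {s : ℝ} (hs : s ∈ Ici R) :
    iteratedDerivWithin 2 (wrep b η) (Ici R) s = η s - b / 2 * gaussianTail (b / 4) η s := by
  have hc : 0 < b / 4 := by positivity
  have hT := fun x (hx : x ∈ Ici R) => hasDerivWithinAt_gaussianTail hc hη hM hx
  have hint := integrableOn_Ioi_inv_sq_mul hR (fun x hx => (hT x hx).continuousWithinAt)
    (fun x hx => abs_gaussianTail_le hc (hR.le.trans hx.le)
      (fun ξ hξ => hM ξ (mem_Ici.mpr (hx.le.trans hξ.le))))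
  rw [show wrep b η = fun s => s * ∫ x in Ioi s, (x ^ 2)⁻¹ * gaussianTail (b / 4) η x from rfl,
    iteratedDerivWithin_two_mul_integral_Ioi_inv_sq_mul hR hT hint hs]
  field_simp [(hR.trans_le hs).ne']
  ring

theorem abs_le_div_rpow_of_forall_rpow_mul_abs_le {R γ A : ℝ} (hR : 0 < R) (hγ : 0 ≤ γ)
    {η : ℝ → ℝ} (hA : ∀ s ∈ Ici R, s ^ γ * |η s| ≤ A) {x ξ : ℝ} (hx : R ≤ x) (hξ : x ≤ ξ) :
    |η ξ| ≤ A / x ^ γ := by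
  have hx0 : 0 < x := hR.trans_le hx
  rw [le_div_iff₀ (Real.rpow_pos_of_pos hx0 γ)]
  calc |η ξ| * x ^ γ ≤ |η ξ| * ξ ^ γ :=
        mul_le_mul_of_nonneg_left (Real.rpow_le_rpow hx0.le hξ hγ) (abs_nonneg _)
    _ = ξ ^ γ * |η ξ| := mul_comm _ _
    _ ≤ A := hA ξ (mem_Ici.mpr (hx.trans hξ))

theorem weighted_estimate_second_deriv_general
    (b R γ : ℝ) (hb : 0 < b) (hR : 0 < R) (hγ : 0 ≤ γ) (η : ℝ → ℝ)
    (hηc : ContinuousOn η (Set.Ici R))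
    (A : ℝ) (hA : ∀ s ∈ Set.Ici R, s ^ γ * |η s| ≤ A) :
    ∀ s ∈ Set.Ici R, s ^ γ * |iteratedDerivWithin 2 (wrep b η) (Set.Ici R) s| ≤ 4 * A := by
  intro s hs
  have hs0 : 0 < s := hR.trans_le hs
  have hsγ : 0 < s ^ γ := Real.rpow_pos_of_pos hs0 γ
  have hA0 : 0 ≤ A := (mul_nonneg hsγ.le (abs_nonneg _)).trans (hA s hs)
  have hηs : ∀ ξ, s ≤ ξ → |η ξ| ≤ A / s ^ γ :=
    fun ξ hξ => abs_le_div_rpow_of_forall_rpow_mul_abs_le hR hγ hA hs hξ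
  have htail : b / 2 * |gaussianTail (b / 4) η s| ≤ A / s ^ γ :=
    calc b / 2 * |gaussianTail (b / 4) η s| ≤ b / 2 * (A / s ^ γ / (2 * (b / 4))) := by
          gcongr
          exact abs_gaussianTail_le (by positivity) hs0.le (fun ξ hξ => hηs ξ hξ.le)
      _ = A / s ^ γ := by field_simp; ring
  rw [iteratedDerivWithin_two_wrep hb hR hηc
    (fun ξ hξ => abs_le_div_rpow_of_forall_rpow_mul_abs_le hR hγ hA le_rfl hξ) hs]
  calc s ^ γ * |η s - b / 2 * gaussianTail (b / 4) η s|
      ≤ s ^ γ * (|η s| + b / 2 * |gaussianTail (b / 4) η s|) := by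
        gcongr
        exact (abs_sub _ _).trans_eq (by rw [abs_mul, abs_of_pos (by positivity : 0 < b / 2)])
    _ ≤ s ^ γ * (A / s ^ γ + A / s ^ γ) := by gcongr; exact hηs s le_rfl
    _ = 2 * A := by field_simp; ring
    _ ≤ 4 * A := by linarith

/-- Weighted estimate for the second derivative of the solution of
`w'' - (b/2)(s w' - w) = η`: if `s^γ |η(s)| ≤ A` on `[R,∞)` then
`s^γ |w''(s)| ≤ 4 A` on `[R,∞)`. -/
theorem weighted_estimate_second_deriv
    (b R γ : ℝ) (hb : 0 < b) (hR : 0 < R) (hγ : 0 ≤ γ) (η : ℝ → ℝ)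
    (hηc : ContinuousOn η (Set.Ici R))
    (hη0 : Filter.Tendsto η Filter.atTop (nhds 0))
    (A : ℝ) (hA : ∀ s ∈ Set.Ici R, s ^ γ * |η s| ≤ A) :
    ∀ s ∈ Set.Ici R, s ^ γ * |iteratedDerivWithin 2 (wrep b η) (Set.Ici R) s| ≤ 4 * A :=
  weighted_estimate_second_deriv_general b R γ hb hR hγ η hηc A hA
end

section
/- Let b > 0, R > 0, and let η : [R,∞) → ℝ be continuous with η(s) → 0 as s → ∞. Let w(s) = s ∫_s^∞ x^{−2} ( ∫_x^∞ ξ exp(−(b/4)(ξ² − x²)) η(ξ) dξ ) dx. Then for every s ∈ [R,∞): |s w'(s) − w(s)| ≤ (2/b) · sup_{ξ≥s} |η(ξ)| and |w(s)/s| ≤ (2/(b s)) · sup_{ξ≥s} |η(ξ)|. -/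
/-!
Write `g(x) = ∫_x^∞ ξ e^{-(b/4)(ξ² - x²)} η(ξ) dξ` and `w(s) = s F(s)` with
`F(s) = ∫_s^∞ x⁻² g(x) dx`. Then `s w' - w = s² F' = -g(s)`, and since the kernel is nonnegative
for `ξ ≥ x ≥ 0` with total mass `2/b`, `|g(x)| ≤ (2/b) sup_{ξ ≥ x} |η|`. Integrating this bound
against `x⁻²` over `(s, ∞)` gives `|w(s)/s| = |F(s)| ≤ (2/(b s)) sup_{ξ ≥ s} |η|`.
-/

open Set Filter MeasureTheory

open Topology

theorem ContinuousOn.exists_forall_Ici_norm_le {E : Type*} [SeminormedAddCommGroup E]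
    {f : ℝ → E} {a c C : ℝ} (hf : ContinuousOn f (Icc a c)) (hC : ∀ x ∈ Ici c, ‖f x‖ ≤ C) :
    ∃ M, ∀ x ∈ Ici a, ‖f x‖ ≤ M := by
  obtain ⟨C', hC'⟩ := isCompact_Icc.exists_bound_of_continuousOn hf
  refine ⟨max C' C, fun x (hx : a ≤ x) => ?_⟩
  rcases le_total x c with hxc | hcx
  · exact le_max_of_le_left (hC' x ⟨hx, hxc⟩)
  · exact le_max_of_le_right (hC x hcx)

theorem hasDerivWithinAt_integral_Ioi {E : Type*} [NormedAddCommGroup E] [NormedSpace ℝ E]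
    [CompleteSpace E] {f : ℝ → E} {a x : ℝ} (hx : a ≤ x) (hf : IntegrableOn f (Ioi a))
    (hc : ContinuousOn f (Ici a)) :
    HasDerivWithinAt (fun u => ∫ t in Ioi u, f t) (-f x) (Ici a) x := by
  -- the FTC filter instance for `𝓝[Icc a c] x` also covers the endpoint case `x = a`
  have : Fact (x ∈ Icc a (x + 1)) := ⟨⟨hx, by linarith⟩⟩
  have hprim : HasDerivWithinAt (fun u => ∫ t in a..u, f t) (f x) (Icc a (x + 1)) x :=
    intervalIntegral.integral_hasDerivWithinAt_right
      ((intervalIntegrable_iff_integrableOn_Ioc_of_le hx).2 (hf.mono_set Ioc_subset_Ioi_self))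
      ((hc.mono Icc_subset_Ici_self).stronglyMeasurableAtFilter_nhdsWithin measurableSet_Icc x)
      ((hc.mono Icc_subset_Ici_self).continuousWithinAt this.out)
  have hnhds : Icc a (x + 1) ∈ 𝓝[Ici a] x := by
    rw [← Ici_inter_Iic]
    exact inter_mem_nhdsWithin _ (Iic_mem_nhds (by linarith))
  have htail : ∀ u ∈ Ici a, ∫ t in Ioi u, f t = (∫ t in Ioi a, f t) - ∫ t in a..u, f t :=
    fun u hu => by rw [← intervalIntegral.integral_Ioi_sub_Ioi hf hu, sub_sub_cancel]
  simpa using ((hprim.mono_of_mem_nhdsWithin hnhds).const_sub (∫ t in Ioi a, f t)).congr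
    htail (htail x hx)

theorem abs_integral_mul_le_of_abs_le {α : Type*} [MeasurableSpace α] {μ : Measure α}
    {k f : α → ℝ} {C : ℝ} (hk : Integrable k μ) (hk0 : ∀ᵐ x ∂μ, 0 ≤ k x)
    (hf : ∀ᵐ x ∂μ, |f x| ≤ C) : |∫ x, k x * f x ∂μ| ≤ C * ∫ x, k x ∂μ := by
  rw [← integral_const_mul, ← Real.norm_eq_abs]
  refine norm_integral_le_of_norm_le (hk.const_mul C) ?_
  filter_upwards [hk0, hf] with x hkx hfx
  rw [Real.norm_eq_abs, abs_mul, abs_of_nonneg hkx, mul_comm]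
  exact mul_le_mul_of_nonneg_right hfx hkx

theorem integrableOn_Ioi_inv_sq {s : ℝ} (hs : 0 < s) :
    IntegrableOn (fun x : ℝ => (x ^ 2)⁻¹) (Ioi s) := by
  simpa using integrableOn_Ioi_rpow_of_lt (a := -2) (by norm_num) hs

theorem integral_Ioi_inv_sq {s : ℝ} (hs : 0 < s) : ∫ x in Ioi s, (x ^ 2)⁻¹ = s⁻¹ := by
  have h := integral_Ioi_rpow_of_lt (a := -2) (by norm_num) hs
  norm_num [Real.rpow_neg_one] at h
  exact h

theorem abs_integral_Ioi_inv_sq_mul_le {g : ℝ → ℝ} {s C : ℝ} (hs : 0 < s)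
    (hg : ∀ x ∈ Ioi s, |g x| ≤ C) : |∫ x in Ioi s, (x ^ 2)⁻¹ * g x| ≤ C / s := by
  have h := abs_integral_mul_le_of_abs_le (integrableOn_Ioi_inv_sq hs)
    (ae_of_all _ fun x => by positivity) (ae_restrict_of_forall_mem measurableSet_Ioi hg)
  rwa [integral_Ioi_inv_sq hs, ← div_eq_mul_inv] at h

theorem hasDerivWithinAt_integral_Ioi_inv_sq_mul {g : ℝ → ℝ} {R s C : ℝ} (hR : 0 < R)
    (hs : R ≤ s) (hgc : ContinuousOn g (Ici R)) (hgC : ∀ x ∈ Ioi R, |g x| ≤ C) :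
    HasDerivWithinAt (fun u => ∫ x in Ioi u, (x ^ 2)⁻¹ * g x) (-((s ^ 2)⁻¹ * g s)) (Ici R) s :=
  hasDerivWithinAt_integral_Ioi hs
    ((integrableOn_Ioi_inv_sq hR).mul_bdd
      ((hgc.mono Ioi_subset_Ici_self).aestronglyMeasurable measurableSet_Ioi)
      (ae_restrict_of_forall_mem measurableSet_Ioi hgC))
    ((continuousOn_id.pow 2).inv₀ (fun _ hx => pow_ne_zero 2 (hR.trans_le hx).ne') |>.mul hgc)

theorem mul_derivWithin_id_mul_sub {F : ℝ → ℝ} {F' s : ℝ} {S : Set ℝ}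
    (hF : HasDerivWithinAt F F' S s) (hS : UniqueDiffWithinAt ℝ S s) :
    s * derivWithin (fun u => u * F u) S s - s * F s = s ^ 2 * F' := by
  rw [((hasDerivAt_id' s).hasDerivWithinAt.fun_mul hF).derivWithin hS]
  ring

noncomputable def tailKernel (b x ξ : ℝ) : ℝ := ξ * Real.exp (-(b / 4) * (ξ ^ 2 - x ^ 2))

theorem tailKernel_nonneg (b x : ℝ) {ξ : ℝ} (hξ : 0 ≤ ξ) : 0 ≤ tailKernel b x ξ :=
  mul_nonneg hξ (Real.exp_pos _).le

theorem tailKernel_eq_exp_mul (b x ξ : ℝ) :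
    tailKernel b x ξ = Real.exp (b / 4 * x ^ 2) * tailKernel b 0 ξ := by
  simp only [tailKernel]
  rw [show -(b / 4) * (ξ ^ 2 - x ^ 2) = b / 4 * x ^ 2 + -(b / 4) * (ξ ^ 2 - 0 ^ 2) by ring,
    Real.exp_add]
  ring

theorem hasDerivAt_tailKernel_primitive {b : ℝ} (hb : b ≠ 0) (x t : ℝ) :
    HasDerivAt (fun t => -(2 / b) * Real.exp (-(b / 4) * (t ^ 2 - x ^ 2)))
      (tailKernel b x t) t := by
  have hsq : HasDerivAt (fun t : ℝ => t ^ 2 - x ^ 2) (2 * t) t := by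
    simpa using (hasDerivAt_pow 2 t).sub_const (x ^ 2)
  refine (((hsq.const_mul (-(b / 4))).exp).const_mul (-(2 / b))).congr_deriv ?_
  rw [tailKernel]
  field_simp
  ring

theorem tendsto_tailKernel_primitive_atTop {b : ℝ} (hb : 0 < b) (x : ℝ) :
    Tendsto (fun t => -(2 / b) * Real.exp (-(b / 4) * (t ^ 2 - x ^ 2))) atTop (𝓝 0) := by
  have hexp : Tendsto (fun t : ℝ => -(b / 4) * (t ^ 2 - x ^ 2)) atTop atBot :=
    (tendsto_atTop_add_const_right _ _ (tendsto_pow_atTop two_ne_zero)).const_mul_atTop_of_neg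
      (by linarith)
  simpa using (Real.tendsto_exp_atBot.comp hexp).const_mul (-(2 / b))

theorem integrableOn_tailKernel {b x : ℝ} (hb : 0 < b) (hx : 0 ≤ x) :
    IntegrableOn (tailKernel b x) (Ioi x) :=
  integrableOn_Ioi_deriv_of_nonneg' (fun t _ => hasDerivAt_tailKernel_primitive hb.ne' x t)
    (fun _ hξ => tailKernel_nonneg b x (hx.trans (le_of_lt hξ)))
    (tendsto_tailKernel_primitive_atTop hb x)

theorem integral_tailKernel {b x : ℝ} (hb : 0 < b) (hx : 0 ≤ x) :
    ∫ ξ in Ioi x, tailKernel b x ξ = 2 / b := by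
  rw [integral_Ioi_of_hasDerivAt_of_nonneg' (fun t _ => hasDerivAt_tailKernel_primitive hb.ne' x t)
    (fun _ hξ => tailKernel_nonneg b x (hx.trans (le_of_lt hξ)))
    (tendsto_tailKernel_primitive_atTop hb x)]
  simp

/-- By the paper's formula for `s w' - w`, `tailTransform b η s = -(s w'(s) - w(s))`. -/
noncomputable def tailTransform (b : ℝ) (η : ℝ → ℝ) (x : ℝ) : ℝ :=
  ∫ ξ in Ioi x, tailKernel b x ξ * η ξ

theorem abs_tailTransform_le {b x A : ℝ} {η : ℝ → ℝ} (hb : 0 < b) (hx : 0 ≤ x)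
    (hA : ∀ ξ ∈ Ioi x, |η ξ| ≤ A) : |tailTransform b η x| ≤ 2 / b * A := by
  have h := abs_integral_mul_le_of_abs_le (integrableOn_tailKernel hb hx)
    ((ae_restrict_iff' measurableSet_Ioi).2 (ae_of_all _ fun ξ (hξ : x < ξ) =>
      tailKernel_nonneg b x (hx.trans hξ.le)))
    (ae_restrict_of_forall_mem measurableSet_Ioi hA)
  rwa [integral_tailKernel hb hx, mul_comm] at h

theorem continuousOn_tailTransform {b R M : ℝ} {η : ℝ → ℝ} (hb : 0 < b) (hR : 0 ≤ R)
    (hη : AEStronglyMeasurable η (volume.restrict (Ioi R))) (hM : ∀ ξ ∈ Ioi R, |η ξ| ≤ M) :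
    ContinuousOn (tailTransform b η) (Ici R) := by
  have hint : IntegrableOn (fun ξ => tailKernel b 0 ξ * η ξ) (Ioi R) :=
    ((integrableOn_tailKernel hb le_rfl).mono_set (Ioi_subset_Ioi hR)).mul_bdd hη
      (ae_restrict_of_forall_mem measurableSet_Ioi hM)
  have hexp : Continuous fun x : ℝ => Real.exp (b / 4 * x ^ 2) := by fun_prop
  refine (hexp.continuousOn.mul hint.continuousOn_Ici_primitive_Ioi).congr fun x _ => ?_
  simp only [Pi.mul_apply, tailTransform, tailKernel_eq_exp_mul b x, mul_assoc,
    integral_const_mul]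

theorem pointwise_boundary_estimates_general
    (b R : ℝ) (hb : 0 < b) (hR : 0 < R) (η : ℝ → ℝ)
    (hηc : ContinuousOn η (Set.Ici R)) :
    ∀ s ∈ Set.Ici R, ∀ A : ℝ, (∀ ξ ∈ Set.Ici s, |η ξ| ≤ A) →
      |s * derivWithin (wrep b η) (Set.Ici R) s - wrep b η s| ≤ (2 / b) * A ∧
      |wrep b η s / s| ≤ (2 / (b * s)) * A := by
  intro s hs A hA
  have hs0 : 0 < s := hR.trans_le hs
  obtain ⟨M, hM⟩ := (hηc.mono Icc_subset_Ici_self).exists_forall_Ici_norm_le hA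
  have hgA : ∀ x ∈ Ici s, |tailTransform b η x| ≤ 2 / b * A := fun x hx =>
    abs_tailTransform_le hb (hs0.le.trans hx) fun ξ hξ => hA ξ (mem_Ici.2 (le_trans hx hξ.le))
  have hgM : ∀ x ∈ Ioi R, |tailTransform b η x| ≤ 2 / b * M := fun x hx =>
    abs_tailTransform_le hb (hR.le.trans hx.le) fun ξ hξ => hM ξ (mem_Ici.2 (lt_trans hx hξ).le)
  have hgc : ContinuousOn (tailTransform b η) (Ici R) :=
    continuousOn_tailTransform hb hR.le
      ((hηc.mono Ioi_subset_Ici_self).aestronglyMeasurable measurableSet_Ioi)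
      fun ξ hξ => hM ξ (mem_Ici_of_Ioi hξ)
  have hF := hasDerivWithinAt_integral_Ioi_inv_sq_mul hR hs hgc hgM
  have hw : wrep b η = fun u => u * ∫ x in Ioi u, (x ^ 2)⁻¹ * tailTransform b η x := rfl
  rw [hw]
  constructor
  · rw [mul_derivWithin_id_mul_sub hF (uniqueDiffOn_Ici R s hs), mul_neg,
      mul_inv_cancel_left₀ (pow_ne_zero 2 hs0.ne'), abs_neg]
    exact hgA s self_mem_Ici
  · rw [mul_div_cancel_left₀ _ hs0.ne']
    exact (abs_integral_Ioi_inv_sq_mul_le hs0 fun x hx => hgA x (mem_Ici_of_Ioi hx)).trans_eq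
      (by ring)

/-- Pointwise estimates: for every `s ∈ [R,∞)`,
`|s w'(s) - w(s)| ≤ (2/b)·sup_{ξ ≥ s} |η(ξ)|` and `|w(s)/s| ≤ (2/(b s))·sup_{ξ ≥ s} |η(ξ)|`. -/
theorem pointwise_boundary_estimates
    (b R : ℝ) (hb : 0 < b) (hR : 0 < R) (η : ℝ → ℝ)
    (hηc : ContinuousOn η (Set.Ici R))
    (hη0 : Filter.Tendsto η Filter.atTop (nhds 0)) :
    ∀ s ∈ Set.Ici R, ∀ A : ℝ, (∀ ξ ∈ Set.Ici s, |η ξ| ≤ A) →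
      |s * derivWithin (wrep b η) (Set.Ici R) s - wrep b η s| ≤ (2 / b) * A ∧
      |wrep b η s / s| ≤ (2 / (b * s)) * A :=
  pointwise_boundary_estimates_general b R hb hR η hηc
end
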